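/- arXiv:2412.10359 — 3 statements merged into one kernel-verified Lean document; each statement's English description precedes it below -/
import Mathlib

section
/- Let f : X → Y be a monomorphism of simplicial sets such that for each connected component S ⊆ Y either f⁻¹(S) → S is a weak homotopy equivalence, or f⁻¹(S) = ∅ and S is weakly contractible. Then there exists a set R and a weak homotopy equivalence X ⊔ R → Y whose restriction to X equals f, where R is the set consisting of one chosen vertex in each component S with f⁻¹(S) = ∅. -/
open CategoryTheory Simplicial Opposite

noncomputable section

/-- A map of simplicial sets is a weak homotopy equivalence iff its geometric realization
is a homotopy equivalence (by Whitehead's theorem, since realizations are CW complexes,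
this agrees with the usual definition via homotopy groups). -/
def IsWeakHomotopyEquiv {X Y : SSet.{0}} (f : X ⟶ Y) : Prop :=
  ∃ g : SSet.toTop.obj Y ⟶ SSet.toTop.obj X,
    ContinuousMap.Homotopic (SSet.toTop.map f ≫ g).hom (ContinuousMap.id _) ∧
    ContinuousMap.Homotopic (g ≫ SSet.toTop.map f).hom (ContinuousMap.id _)

/-- A simplicial set is weakly contractible if it is weakly equivalent to `Δ[0]`, i.e. its
realization is homotopy equivalent to that of `Δ[0]`. -/
def WeaklyContractible (S : SSet.{0}) : Prop :=
  Nonempty (ContinuousMap.HomotopyEquiv (SSet.toTop.obj S) (SSet.toTop.obj (Δ[0] : SSet.{0})))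

/-- The `i`-th vertex of a simplex of a simplicial set. -/
def SSet.vertexOf (Y : SSet) {n : SimplexCategoryᵒᵖ} (σ : Y.obj n)
    (i : Fin (n.unop.len + 1)) : Y _⦋0⦌ :=
  Y.map (SimplexCategory.const ⦋0⦌ n.unop i).op σ

lemma SSet.vertexOf_map (Y : SSet) {n m : SimplexCategoryᵒᵖ} (g : n ⟶ m) (σ : Y.obj n)
    (i : Fin (m.unop.len + 1)) :
    Y.vertexOf (Y.map g σ) i = Y.vertexOf σ (g.unop.toOrderHom i) := by
  dsimp [SSet.vertexOf]
  rw [← FunctorToTypes.map_comp_apply]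
  rfl

/-- Two vertices are related if there is an edge from the first to the second. -/
def edgeRel (Y : SSet) (a b : Y _⦋0⦌) : Prop :=
  ∃ e : Y _⦋1⦌, Y.δ 1 e = a ∧ Y.δ 0 e = b

/-- The set of connected components of a simplicial set. -/
def Pi0 (Y : SSet) : Type := Quot (edgeRel Y)

/-- The connected component of `Y` indexed by `c : Pi0 Y`, as a simplicial set: the
simplices all of whose vertices lie in `c`. -/
def componentOf (Y : SSet) (c : Pi0 Y) : SSet where
  obj n := { σ : Y.obj n // ∀ i, Quot.mk (edgeRel Y) (Y.vertexOf σ i) = c }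
  map g := TypeCat.ofHom fun σ => ⟨Y.map g σ.1, fun i => by rw [SSet.vertexOf_map]; exact σ.2 _⟩
  map_id n := by ext σ; simp
  map_comp g h := by ext σ; simp

/-- The preimage under `f : X ⟶ Y` of the connected component `c` of `Y`. -/
def preimageComponent {X Y : SSet} (f : X ⟶ Y) (c : Pi0 Y) : SSet where
  obj n := { σ : X.obj n // ∀ i, Quot.mk (edgeRel Y) (Y.vertexOf (f.app n σ) i) = c }
  map g := TypeCat.ofHom fun σ => ⟨X.map g σ.1, fun i => by
    rw [FunctorToTypes.naturality, SSet.vertexOf_map]; exact σ.2 _⟩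
  map_id n := by ext σ; simp
  map_comp g h := by ext σ; simp

/-- The restriction `f⁻¹(S) ⟶ S` of `f : X ⟶ Y` over the connected component `S` of `Y`
indexed by `c`. -/
def restrictToComponent {X Y : SSet} (f : X ⟶ Y) (c : Pi0 Y) :
    preimageComponent f c ⟶ componentOf Y c where
  app n := TypeCat.ofHom fun σ => ⟨f.app n σ.1, σ.2⟩
  naturality n m g := by
    ext σ; apply Subtype.ext; exact FunctorToTypes.naturality f g σ.1

/-- A type `R`, viewed as a discrete (constant) simplicial set. -/
def discreteSSet (R : Type) : SSet := (Functor.const SimplexCategoryᵒᵖ).obj R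

end

/-!
Geometric realization sends the decomposition of a simplicial set into its connected components
to a topological disjoint union, and a disjoint union of homotopy equivalences is a homotopy
equivalence. Hence a map is a weak equivalence as soon as it is one over every component of the
target. Extending `f` by one vertex in each component it misses changes nothing over the
components that `f` meets, and over a missed component it gives a map from a point to a weakly
contractible simplicial set.
-/

universe u

open CategoryTheory Limits Simplicial Opposite

namespace ContinuousMap

variable {ι : Type*} {X Y : ι → Type*} [∀ i, TopologicalSpace (X i)]
  [∀ i, TopologicalSpace (Y i)]

def sigmaMap (f : ∀ i, C(X i, Y i)) : C((Σ i, X i), Σ i, Y i) :=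
  .sigma fun i => (sigmaMk i).comp (f i)

def Homotopy.sigmaMap {f₀ f₁ : ∀ i, C(X i, Y i)} (F : ∀ i, Homotopy (f₀ i) (f₁ i)) :
    Homotopy (ContinuousMap.sigmaMap f₀) (ContinuousMap.sigmaMap f₁) where
  toContinuousMap :=
    (ContinuousMap.sigma fun i => (sigmaMk i).comp ((F i).toContinuousMap.comp prodSwap)).comp
      ((Homeomorph.sigmaProdDistrib (X := X) (Y := unitInterval) :
        C((Σ i, X i) × unitInterval, Σ i, X i × unitInterval)).comp prodSwap)
  map_zero_left := fun ⟨i, x⟩ => congrArg (Sigma.mk i) ((F i).apply_zero x)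
  map_one_left := fun ⟨i, x⟩ => congrArg (Sigma.mk i) ((F i).apply_one x)

def HomotopyEquiv.sigmaCongrRight (h : ∀ i, X i ≃ₕ Y i) : (Σ i, X i) ≃ₕ Σ i, Y i where
  toFun := sigmaMap fun i => (h i).toFun
  invFun := sigmaMap fun i => (h i).invFun
  left_inv := ⟨Homotopy.sigmaMap fun i => (h i).left_inv.some⟩
  right_inv := ⟨Homotopy.sigmaMap fun i => (h i).right_inv.some⟩

theorem Homotopic.of_contractibleSpace {P Q : Type*} [TopologicalSpace P] [TopologicalSpace Q]
    [ContractibleSpace Q] (u v : C(P, Q)) : u.Homotopic v := by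
  obtain ⟨y, hy⟩ := id_nullhomotopic Q
  have hu : u.Homotopic (.const P y) := hy.comp (.refl u)
  have hv : v.Homotopic (.const P y) := hy.comp (.refl v)
  exact hu.trans hv.symm

end ContinuousMap

namespace TopCat

open ContinuousMap

def IsHomotopyEquiv {P Q : TopCat} (m : P ⟶ Q) : Prop :=
  ∃ e : P ≃ₕ Q, e.toFun = m.hom

theorem IsHomotopyEquiv.comp {P Q R : TopCat} {m : P ⟶ Q} {m' : Q ⟶ R}
    (hm : IsHomotopyEquiv m) (hm' : IsHomotopyEquiv m') : IsHomotopyEquiv (m ≫ m') := by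
  obtain ⟨e, he⟩ := hm
  obtain ⟨e', he'⟩ := hm'
  exact ⟨e.trans e', by rw [hom_comp, ← he, ← he']; rfl⟩

theorem isHomotopyEquiv_iso_hom {P Q : TopCat} (e : P ≅ Q) : IsHomotopyEquiv e.hom :=
  ⟨(homeoOfIso e).toHomotopyEquiv, rfl⟩

theorem isHomotopyEquiv_of_contractibleSpace {P Q : TopCat} [ContractibleSpace P]
    [ContractibleSpace Q] (m : P ⟶ Q) : IsHomotopyEquiv m := by
  obtain ⟨p⟩ := (inferInstance : Nonempty P)
  exact ⟨⟨m.hom, .const Q p, .of_contractibleSpace _ _, .of_contractibleSpace _ _⟩, rfl⟩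

theorem isHomotopyEquiv_sigmaMap {ι : Type} {A B : ι → TopCat.{0}} (u : ∀ i, A i ⟶ B i)
    (hu : ∀ i, IsHomotopyEquiv (u i)) :
    IsHomotopyEquiv (ofHom (sigmaMap fun i => (u i).hom) : of (Σ i, A i) ⟶ of (Σ i, B i)) := by
  choose e he using hu
  exact ⟨HomotopyEquiv.sigmaCongrRight e, by simp only [HomotopyEquiv.sigmaCongrRight, he]; rfl⟩

theorem IsHomotopyEquiv.of_isColimit_cofan {ι : Type} {A B : ι → TopCat.{0}} {P Q : TopCat.{0}}
    {a : ∀ i, A i ⟶ P} {b : ∀ i, B i ⟶ Q} (hP : IsColimit (Cofan.mk P a))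
    (hQ : IsColimit (Cofan.mk Q b)) (m : P ⟶ Q) (u : ∀ i, A i ⟶ B i)
    (hm : ∀ i, a i ≫ m = u i ≫ b i) (hu : ∀ i, IsHomotopyEquiv (u i)) :
    IsHomotopyEquiv m := by
  let eP := hP.coconePointUniqueUpToIso (sigmaCofanIsColimit A)
  let eQ := hQ.coconePointUniqueUpToIso (sigmaCofanIsColimit B)
  let φ : (sigmaCofan A).pt ⟶ (sigmaCofan B).pt := ofHom (sigmaMap fun i => (u i).hom)
  have hfactor : m = eP.hom ≫ φ ≫ eQ.inv := by
    refine Cofan.IsColimit.hom_ext hP _ _ fun i => ?_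
    have hA : a i ≫ eP.hom = (sigmaCofan A).inj i :=
      hP.comp_coconePointUniqueUpToIso_hom _ ⟨i⟩
    have hB : (sigmaCofan B).inj i ≫ eQ.inv = b i :=
      hQ.comp_coconePointUniqueUpToIso_inv _ ⟨i⟩
    have hσ : (sigmaCofan A).inj i ≫ φ = u i ≫ (sigmaCofan B).inj i := rfl
    rw [cofan_mk_inj, reassoc_of% hA, reassoc_of% hσ, hB, hm]
  rw [hfactor]
  exact (isHomotopyEquiv_iso_hom eP).comp ((isHomotopyEquiv_sigmaMap u hu).comp
    (isHomotopyEquiv_iso_hom eQ.symm))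

end TopCat

theorem isWeakHomotopyEquiv_iff {X Y : SSet.{0}} (f : X ⟶ Y) :
    IsWeakHomotopyEquiv f ↔ TopCat.IsHomotopyEquiv (SSet.toTop.map f) := by
  constructor
  · rintro ⟨g, hl, hr⟩
    exact ⟨⟨(SSet.toTop.map f).hom, g.hom, hl, hr⟩, rfl⟩
  · rintro ⟨e, he⟩
    refine ⟨TopCat.ofHom e.invFun, ?_, ?_⟩
    · simpa [← he] using e.left_inv
    · simpa [← he] using e.right_inv

namespace IsWeakHomotopyEquiv

variable {X Y Z : SSet.{0}}

theorem comp {f : X ⟶ Y} {g : Y ⟶ Z} (hf : IsWeakHomotopyEquiv f)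
    (hg : IsWeakHomotopyEquiv g) : IsWeakHomotopyEquiv (f ≫ g) := by
  rw [isWeakHomotopyEquiv_iff] at *
  rw [Functor.map_comp]
  exact hf.comp hg

theorem of_isIso (f : X ⟶ Y) [IsIso f] : IsWeakHomotopyEquiv f :=
  (isWeakHomotopyEquiv_iff f).2 (TopCat.isHomotopyEquiv_iso_hom (SSet.toTop.mapIso (asIso f)))

theorem of_isColimit_cofan {ι : Type} {A B : ι → SSet.{0}} {a : ∀ i, A i ⟶ X}
    {b : ∀ i, B i ⟶ Y} (hX : IsColimit (Cofan.mk X a)) (hY : IsColimit (Cofan.mk Y b))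
    (f : X ⟶ Y) (u : ∀ i, A i ⟶ B i) (hf : ∀ i, a i ≫ f = u i ≫ b i)
    (hu : ∀ i, IsWeakHomotopyEquiv (u i)) : IsWeakHomotopyEquiv f := by
  simp only [isWeakHomotopyEquiv_iff] at *
  exact .of_isColimit_cofan (isColimitCofanMkObjOfIsColimit SSet.toTop _ _ hX)
    (isColimitCofanMkObjOfIsColimit SSet.toTop _ _ hY) _ _
    (fun i => by simp only [← Functor.map_comp, hf]) hu

end IsWeakHomotopyEquiv

theorem WeaklyContractible.contractibleSpace_toTop {S : SSet.{0}} (hS : WeaklyContractible S) :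
    ContractibleSpace (SSet.toTop.obj S) :=
  hS.some.contractibleSpace

theorem isWeakHomotopyEquiv_of_weaklyContractible {X Y : SSet.{0}} (f : X ⟶ Y)
    (hX : WeaklyContractible X) (hY : WeaklyContractible Y) : IsWeakHomotopyEquiv f := by
  have := hX.contractibleSpace_toTop
  have := hY.contractibleSpace_toTop
  exact (isWeakHomotopyEquiv_iff f).2 (TopCat.isHomotopyEquiv_of_contractibleSpace _)

def SSet.isTerminalOfUnique (P : SSet) [∀ n, Unique (P.obj n)] : IsTerminal P :=
  IsTerminal.ofUniqueHom (fun Z => { app := fun n => TypeCat.ofHom fun _ => default })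
    (fun Z g => by ext; exact Subsingleton.elim _ _)

theorem weaklyContractible_of_unique (P : SSet.{0}) [∀ n, Unique (P.obj n)] :
    WeaklyContractible P :=
  ⟨(TopCat.homeoOfIso (SSet.toTop.mapIso ((SSet.isTerminalOfUnique P).uniqueUpToIso
    SSet.stdSimplex.isTerminalObj₀))).toHomotopyEquiv⟩

def SSet.isInitialOfIsEmpty (P : SSet) (hP : ∀ n, IsEmpty (P.obj n)) : IsInitial P :=
  IsInitial.ofUniqueHom
    (fun Z => { app := fun n => TypeCat.ofHom fun x => (hP n).elim x
                naturality := fun n _ _ => by ext x; exact (hP n).elim x })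
    (fun Z g => by ext n x; exact (hP n).elim x)

theorem not_isWeakHomotopyEquiv_of_isEmpty {X Y : SSet.{0}} (f : X ⟶ Y)
    (hX : ∀ n, IsEmpty (X.obj n)) (y : Y _⦋0⦌) : ¬ IsWeakHomotopyEquiv f := by
  rintro ⟨g, -, -⟩
  have hinit := (SSet.isInitialOfIsEmpty X hX).isInitialObj SSet.toTop X
  exact (hinit.to (TopCat.of PEmpty) (g (SSet.toTop.map (SSet.const y : Δ[0] ⟶ Y) default))).elim

namespace SSet

variable {Y : SSet}

theorem vertexOf_zero (v : Y _⦋0⦌) (i : Fin 1) : Y.vertexOf v i = v := by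
  rw [vertexOf, SimplexCategory.hom_zero_zero (SimplexCategory.const _ _ i), op_id,
    Functor.map_id_apply]

theorem vertexOf_map_const {n : SimplexCategoryᵒᵖ} (v : Y _⦋0⦌) (i : Fin (n.unop.len + 1)) :
    Y.vertexOf (Y.map (n.unop.const ⦋0⦌ 0).op v) i = v := by
  rw [vertexOf_map, vertexOf_zero]

theorem mk_vertexOf_eq_mk_vertexOf {n : SimplexCategoryᵒᵖ} (σ : Y.obj n)
    (i j : Fin (n.unop.len + 1)) :
    Quot.mk (edgeRel Y) (Y.vertexOf σ i) = Quot.mk (edgeRel Y) (Y.vertexOf σ j) := by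
  wlog hij : i ≤ j generalizing i j
  · exact (this j i (le_of_not_ge hij)).symm
  refine Quot.sound ⟨Y.map (SimplexCategory.mkOfLe i j hij).op σ, ?_, ?_⟩
  all_goals
    rw [SimplicialObject.δ, vertexOf, ← Functor.map_comp_apply, ← op_comp,
      SimplexCategory.eq_const_of_zero (_ ≫ _)]
    rfl

theorem existsUnique_forall_mk_vertexOf_eq {n : SimplexCategoryᵒᵖ} (σ : Y.obj n) :
    ∃! c : Pi0 Y, ∀ i, Quot.mk (edgeRel Y) (Y.vertexOf σ i) = c :=
  ⟨_, fun i => mk_vertexOf_eq_mk_vertexOf σ i 0, fun _ hc => (hc 0).symm⟩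

end SSet

theorem Function.bijective_sigma_subtype_val {α C : Type*} {P : C → α → Prop}
    (h : ∀ x, ∃! c, P c x) : Function.Bijective fun p : Σ c, {x // P c x} => p.2.1 := by
  refine ⟨?_, fun x => ⟨⟨_, x, (h x).exists.choose_spec⟩, rfl⟩⟩
  rintro ⟨c, x, hx⟩ ⟨c', x', hx'⟩ (rfl : x = x')
  obtain rfl := (h x).unique hx hx'
  rfl

noncomputable def SSet.isColimitCofanMkOfBijective {ι : Type u} {A : ι → SSet.{u}}
    {P : SSet.{u}} (a : ∀ i, A i ⟶ P)
    (h : ∀ n, Function.Bijective fun p : Σ i, (A i).obj n => (a p.1).app n p.2) :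
    IsColimit (Cofan.mk P a) :=
  evaluationJointlyReflectsColimits _ fun n => (isColimitMapCoconeCofanMkEquiv _ _ _).symm
    ((Cofan.nonempty_isColimit_iff_bijective_fromSigma _).2 (h n)).some

def componentOf.ι (Y : SSet) (c : Pi0 Y) : componentOf Y c ⟶ Y where
  app _ := TypeCat.ofHom Subtype.val

def preimageComponent.ι {X Y : SSet} (f : X ⟶ Y) (c : Pi0 Y) : preimageComponent f c ⟶ X where
  app _ := TypeCat.ofHom Subtype.val

noncomputable def isColimitCofanComponentOf (Y : SSet) :
    IsColimit (Cofan.mk Y (componentOf.ι Y)) :=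
  SSet.isColimitCofanMkOfBijective _ fun _ =>
    Function.bijective_sigma_subtype_val SSet.existsUnique_forall_mk_vertexOf_eq

noncomputable def isColimitCofanPreimageComponent {X Y : SSet} (f : X ⟶ Y) :
    IsColimit (Cofan.mk X (preimageComponent.ι f)) :=
  SSet.isColimitCofanMkOfBijective _ fun _ =>
    Function.bijective_sigma_subtype_val fun σ =>
      SSet.existsUnique_forall_mk_vertexOf_eq (f.app _ σ)

theorem isWeakHomotopyEquiv_of_restrictToComponent {X Y : SSet.{0}} (f : X ⟶ Y)
    (h : ∀ c, IsWeakHomotopyEquiv (restrictToComponent f c)) : IsWeakHomotopyEquiv f :=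
  .of_isColimit_cofan (isColimitCofanPreimageComponent f) (isColimitCofanComponentOf Y) f _
    (fun _ => rfl) h

def discreteSSet.desc {R : Type} {Y : SSet} (v : R → Y _⦋0⦌) : discreteSSet R ⟶ Y where
  app n := TypeCat.ofHom fun r => Y.map (n.unop.const ⦋0⦌ 0).op (v r)
  naturality _ _ g := by
    ext r
    change Y.map _ (v r) = Y.map g (Y.map _ (v r))
    rw [← Functor.map_comp_apply]
    rfl

noncomputable def componentOf.vertex {Y : SSet} (c : Pi0 Y) : (componentOf Y c) _⦋0⦌ :=
  ⟨Quot.out c, fun i => by rw [SSet.vertexOf_zero]; exact Quot.out_eq c⟩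

def preimageComponent.map {A B Y : SSet} (φ : A ⟶ B) (g : B ⟶ Y) (c : Pi0 Y) :
    preimageComponent (φ ≫ g) c ⟶ preimageComponent g c where
  app n := TypeCat.ofHom fun σ => ⟨φ.app n σ.1, σ.2⟩
  naturality _ _ e := by
    ext σ
    apply Subtype.ext
    exact NatTrans.naturality_apply φ e σ.1

theorem isIso_preimageComponentMap {A B Y : SSet} (φ : A ⟶ B) [Mono φ] (g : B ⟶ Y)
    (c : Pi0 Y) (hφ : ∀ n (σ : (preimageComponent g c).obj n), ∃ a, φ.app n a = σ.1) :
    IsIso (preimageComponent.map φ g c) := by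
  refine (NatTrans.isIso_iff_isIso_app _).2 fun n =>
    (isIso_iff_bijective _).2 ⟨fun σ τ hστ => Subtype.ext ?_, fun σ => ?_⟩
  · have := (NatTrans.mono_iff_mono_app φ).1 inferInstance n
    exact (mono_iff_injective _).1 this (congrArg Subtype.val hστ)
  · obtain ⟨σ, hσ⟩ := σ
    obtain ⟨a, rfl⟩ := hφ n ⟨σ, hσ⟩
    exact ⟨⟨a, hσ⟩, rfl⟩

theorem IsWeakHomotopyEquiv.restrictToComponent_of_comp {A B Y : SSet.{0}} {φ : A ⟶ B}
    {g : B ⟶ Y} {c : Pi0 Y} [IsIso (preimageComponent.map φ g c)]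
    (h : IsWeakHomotopyEquiv (restrictToComponent (φ ≫ g) c)) :
    IsWeakHomotopyEquiv (restrictToComponent g c) := by
  have hfactor : restrictToComponent g c =
      inv (preimageComponent.map φ g c) ≫ restrictToComponent (φ ≫ g) c := by
    rw [IsIso.eq_inv_comp]
    rfl
  rw [hfactor]
  exact (of_isIso _).comp h

theorem SSet.coprod_app_cases {A B : SSet} {n : SimplexCategoryᵒᵖ} (x : (A ⨿ B).obj n) :
    (∃ a, (coprod.inl : A ⟶ A ⨿ B).app n a = x) ∨
      ∃ b, (coprod.inr : B ⟶ A ⨿ B).app n b = x := by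
  obtain ⟨⟨j⟩, y, rfl⟩ := FunctorToTypes.jointly_surjective _ n (coprodIsCoprod A B) x
  cases j
  · exact .inl ⟨y, rfl⟩
  · exact .inr ⟨y, rfl⟩

namespace IsWeakHomotopyEquiv

variable {A B Y : SSet.{0}} {f : A ⟶ Y} {k : B ⟶ Y} {c : Pi0 Y}

theorem restrictToComponent_coprodDesc_of_inl (hf : IsWeakHomotopyEquiv (restrictToComponent f c))
    (hk : ∀ n, IsEmpty ((preimageComponent k c).obj n)) :
    IsWeakHomotopyEquiv (restrictToComponent (coprod.desc f k) c) := by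
  rw [← coprod.inr_desc f k] at hk
  have : IsIso (preimageComponent.map coprod.inl (coprod.desc f k) c) :=
    isIso_preimageComponentMap _ _ _ fun n ⟨x, hx⟩ => by
      obtain ⟨a, rfl⟩ | ⟨b, rfl⟩ := SSet.coprod_app_cases x
      · exact ⟨a, rfl⟩
      · exact (hk n).elim ⟨b, hx⟩
  rw [← coprod.inl_desc f k] at hf
  exact hf.restrictToComponent_of_comp

theorem restrictToComponent_coprodDesc_of_inr (hk : IsWeakHomotopyEquiv (restrictToComponent k c))
    (hf : ∀ n, IsEmpty ((preimageComponent f c).obj n)) :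
    IsWeakHomotopyEquiv (restrictToComponent (coprod.desc f k) c) := by
  rw [← coprod.inl_desc f k] at hf
  have : IsIso (preimageComponent.map coprod.inr (coprod.desc f k) c) :=
    isIso_preimageComponentMap _ _ _ fun n ⟨x, hx⟩ => by
      obtain ⟨a, rfl⟩ | ⟨b, rfl⟩ := SSet.coprod_app_cases x
      · exact (hf n).elim ⟨a, hx⟩
      · exact ⟨b, rfl⟩
  rw [← coprod.inr_desc f k] at hk
  exact hk.restrictToComponent_of_comp

end IsWeakHomotopyEquiv

section MissedComponents

variable {X Y : SSet.{0}} (f : X ⟶ Y)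

def missedComponents : Type := {c : Pi0 Y // ∀ n, IsEmpty ((preimageComponent f c).obj n)}

noncomputable def missedBasepoints : discreteSSet (missedComponents f) ⟶ Y :=
  discreteSSet.desc fun r => Quot.out r.1

variable {f}

theorem mk_vertexOf_missedBasepoints {n : SimplexCategoryᵒᵖ} (r : missedComponents f)
    (i : Fin (n.unop.len + 1)) :
    Quot.mk (edgeRel Y) (Y.vertexOf ((missedBasepoints f).app n r) i) = r.1 := by
  change Quot.mk _ (Y.vertexOf (Y.map _ (Quot.out r.1)) i) = r.1
  rw [SSet.vertexOf_map_const]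
  exact Quot.out_eq _

abbrev uniquePreimageComponentMissedBasepoints {c : Pi0 Y}
    (hc : ∀ n, IsEmpty ((preimageComponent f c).obj n)) (n : SimplexCategoryᵒᵖ) :
    Unique ((preimageComponent (missedBasepoints f) c).obj n) where
  default := ⟨⟨c, hc⟩, mk_vertexOf_missedBasepoints ⟨c, hc⟩⟩
  uniq r := Subtype.ext (Subtype.ext ((mk_vertexOf_missedBasepoints r.1 0).symm.trans (r.2 0)))

theorem isEmpty_preimageComponent_missedBasepoints {c : Pi0 Y}
    (hc : ¬ ∀ n, IsEmpty ((preimageComponent f c).obj n)) (n : SimplexCategoryᵒᵖ) :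
    IsEmpty ((preimageComponent (missedBasepoints f) c).obj n) :=
  ⟨fun r => hc ((mk_vertexOf_missedBasepoints r.1 0).symm.trans (r.2 0) ▸ r.1.2)⟩

end MissedComponents

open Limits in
theorem stmt10_general {X Y : SSet} (f : X ⟶ Y)
    (h : ∀ c : Pi0 Y,
      IsWeakHomotopyEquiv (restrictToComponent f c) ∨
      ((∀ n, IsEmpty ((preimageComponent f c).obj n)) ∧
        WeaklyContractible (componentOf Y c))) :
    ∃ (R : Type) (g : X ⨿ discreteSSet R ⟶ Y),
      IsWeakHomotopyEquiv g ∧ coprod.inl ≫ g = f := by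
  refine ⟨missedComponents f, coprod.desc f (missedBasepoints f), ?_, coprod.inl_desc _ _⟩
  refine isWeakHomotopyEquiv_of_restrictToComponent _ fun c => ?_
  by_cases hc : ∀ n, IsEmpty ((preimageComponent f c).obj n)
  · have hS : WeaklyContractible (componentOf Y c) :=
      ((h c).resolve_left (not_isWeakHomotopyEquiv_of_isEmpty _ hc (componentOf.vertex c))).2
    have := uniquePreimageComponentMissedBasepoints hc
    have hbase : IsWeakHomotopyEquiv (restrictToComponent (missedBasepoints f) c) :=
      isWeakHomotopyEquiv_of_weaklyContractible _ (weaklyContractible_of_unique _) hS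
    exact hbase.restrictToComponent_coprodDesc_of_inr hc
  · have hf := (h c).resolve_right fun h' => hc h'.1
    exact hf.restrictToComponent_coprodDesc_of_inl (isEmpty_preimageComponent_missedBasepoints hc)

open Limits in
/-- if `f : X ⟶ Y` is a monomorphism of simplicial sets such that for each
connected component `S` of `Y` either `f⁻¹(S) ⟶ S` is a weak homotopy equivalence, or
`f⁻¹(S) = ∅` and `S` is weakly contractible, then there is a set `R` and a weak homotopy
equivalence `X ⊔ R ⟶ Y` restricting to `f` on `X`. -/
theorem stmt10 {X Y : SSet} (f : X ⟶ Y) [Mono f]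
    (h : ∀ c : Pi0 Y,
      IsWeakHomotopyEquiv (restrictToComponent f c) ∨
      ((∀ n, IsEmpty ((preimageComponent f c).obj n)) ∧
        WeaklyContractible (componentOf Y c))) :
    ∃ (R : Type) (g : X ⨿ discreteSSet R ⟶ Y),
      IsWeakHomotopyEquiv g ∧ coprod.inl ≫ g = f :=
  stmt10_general f h
end

section
/- Let M and N be model categories and F : M → N a fully faithful functor that is both a left Quillen equivalence (with some right adjoint) and a right Quillen equivalence (with some left adjoint). Then the model structure on M is both left-induced and right-induced from that on N along F: a morphism f in M is a cofibration (respectively fibration, weak equivalence) if and only if F(f) is a cofibration (respectively fibration, weak equivalence) in N. -/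
open CategoryTheory Limits

universe v₁ v₂ u₁ u₂

/-- `f` is a retract of `g` in the arrow category. -/
def IsRetractOf {C : Type u₁} [Category.{v₁} C] {X Y Z W : C} (f : X ⟶ Y) (g : Z ⟶ W) : Prop :=
  ∃ (i : X ⟶ Z) (r : Z ⟶ X) (i' : Y ⟶ W) (r' : W ⟶ Y),
    i ≫ r = 𝟙 X ∧ i' ≫ r' = 𝟙 Y ∧ i ≫ g = f ≫ i' ∧ g ≫ r' = r ≫ f

/-- A (Quillen) model structure on a category: three classes of morphisms (weak
equivalences, cofibrations, fibrations) satisfying 2-out-of-3, closure under retracts,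
the lifting axioms and the factorization axioms. -/
structure ModelStructure (C : Type u₁) [Category.{v₁} C] where
  weq : MorphismProperty C
  cof : MorphismProperty C
  fib : MorphismProperty C
  weq_id : ∀ X : C, weq (𝟙 X)
  weq_comp : ∀ {X Y Z : C} (f : X ⟶ Y) (g : Y ⟶ Z), weq f → weq g → weq (f ≫ g)
  weq_of_comp_right : ∀ {X Y Z : C} (f : X ⟶ Y) (g : Y ⟶ Z), weq g → weq (f ≫ g) → weq f
  weq_of_comp_left : ∀ {X Y Z : C} (f : X ⟶ Y) (g : Y ⟶ Z), weq f → weq (f ≫ g) → weq g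
  weq_retract : ∀ {X Y Z W : C} (f : X ⟶ Y) (g : Z ⟶ W), IsRetractOf f g → weq g → weq f
  cof_retract : ∀ {X Y Z W : C} (f : X ⟶ Y) (g : Z ⟶ W), IsRetractOf f g → cof g → cof f
  fib_retract : ∀ {X Y Z W : C} (f : X ⟶ Y) (g : Z ⟶ W), IsRetractOf f g → fib g → fib f
  lift_trivCof_fib : ∀ {A B X Y : C} (i : A ⟶ B) (p : X ⟶ Y),
    cof i → weq i → fib p → HasLiftingProperty i p
  lift_cof_trivFib : ∀ {A B X Y : C} (i : A ⟶ B) (p : X ⟶ Y),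
    cof i → fib p → weq p → HasLiftingProperty i p
  fact_trivCof_fib : ∀ {X Y : C} (f : X ⟶ Y),
    ∃ (Z : C) (i : X ⟶ Z) (p : Z ⟶ Y), cof i ∧ weq i ∧ fib p ∧ i ≫ p = f
  fact_cof_trivFib : ∀ {X Y : C} (f : X ⟶ Y),
    ∃ (Z : C) (i : X ⟶ Z) (p : Z ⟶ Y), cof i ∧ fib p ∧ weq p ∧ i ≫ p = f

/-- An object is cofibrant if the map from the initial object is a cofibration. -/
def ModelStructure.Cofibrant {C : Type u₁} [Category.{v₁} C] [HasInitial C]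
    (m : ModelStructure C) (A : C) : Prop :=
  m.cof (initial.to A)

/-- An object is fibrant if its map to the terminal object is a fibration. -/
def ModelStructure.Fibrant {C : Type u₁} [Category.{v₁} C] [HasTerminal C]
    (m : ModelStructure C) (X : C) : Prop :=
  m.fib (terminal.from X)

/-- let `M`, `N` be model categories and `F : M ⥤ N` a fully faithful functor
that is both a left Quillen equivalence (with right adjoint `G`) and a right Quillen
equivalence (with left adjoint `L`); Quillen equivalences are encoded by the standard
criterion: for cofibrant `A` and fibrant `X`, a map `F A ⟶ X` is a weak equivalence iff its
adjunct is.  Then the model structure on `M` is both left- and right-induced from that of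
`N` along `F`: a morphism `f` of `M` is a cofibration (resp. fibration, weak equivalence)
iff `F.map f` is one in `N`. -/
theorem stmt13 {M : Type u₁} {N : Type u₂} [Category.{v₁} M] [Category.{v₂} N]
    [HasInitial M] [HasTerminal M] [HasInitial N] [HasTerminal N]
    (mM : ModelStructure M) (mN : ModelStructure N)
    (F : M ⥤ N) [F.Full] [F.Faithful]
    (G : N ⥤ M) (adj : F ⊣ G) (L : N ⥤ M) (adj' : L ⊣ F)
    -- F is left Quillen: it preserves cofibrations and trivial cofibrations
    (hF_cof : ∀ {X Y : M} (f : X ⟶ Y), mM.cof f → mN.cof (F.map f))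
    (hF_trivCof : ∀ {X Y : M} (f : X ⟶ Y), mM.cof f → mM.weq f →
      mN.cof (F.map f) ∧ mN.weq (F.map f))
    -- F is right Quillen: it preserves fibrations and trivial fibrations
    (hF_fib : ∀ {X Y : M} (f : X ⟶ Y), mM.fib f → mN.fib (F.map f))
    (hF_trivFib : ∀ {X Y : M} (f : X ⟶ Y), mM.fib f → mM.weq f →
      mN.fib (F.map f) ∧ mN.weq (F.map f))
    -- F ⊣ G is a Quillen equivalence
    (hQE₁ : ∀ (A : M), mM.Cofibrant A → ∀ (X : N), mN.Fibrant X → ∀ (f : F.obj A ⟶ X),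
      (mN.weq f ↔ mM.weq (adj.homEquiv A X f)))
    -- L ⊣ F is a Quillen equivalence
    (hQE₂ : ∀ (B : N), mN.Cofibrant B → ∀ (Y : M), mM.Fibrant Y → ∀ (g : L.obj B ⟶ Y),
      (mM.weq g ↔ mN.weq (adj'.homEquiv B Y g))) :
    ∀ {X Y : M} (f : X ⟶ Y),
      (mM.cof f ↔ mN.cof (F.map f)) ∧ (mM.fib f ↔ mN.fib (F.map f)) ∧
        (mM.weq f ↔ mN.weq (F.map f)) := by
  -- F preserves all weak equivalences
  have Fweq : ∀ {X Y : M} (f : X ⟶ Y), mM.weq f → mN.weq (F.map f) := by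
    intro X Y f hf
    obtain ⟨Z, i, p, hci, hfp, hwp, hcomp⟩ := mM.fact_cof_trivFib f
    have hwi : mM.weq i := mM.weq_of_comp_right i p hwp (by rw [hcomp]; exact hf)
    have h1 := hF_trivCof i hci hwi
    have h2 := hF_trivFib p hfp hwp
    have : F.map f = F.map i ≫ F.map p := by rw [← F.map_comp, hcomp]
    rw [this]
    exact mN.weq_comp _ _ h1.2 h2.2
  -- F reflects weak equivalences between cofibrant objects
  have refl_cof : ∀ {A B : M} (g : A ⟶ B), mM.Cofibrant A → mM.Cofibrant B →
      mN.weq (F.map g) → mM.weq g := by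
    intro A B g hA hB hg
    -- fibrant replacement of F B in N
    obtain ⟨R, j, pR, hcj, hwj, hfpR, hcompR⟩ := mN.fact_trivCof_fib (terminal.from (F.obj B))
    have hRfib : mN.Fibrant R := by
      have : terminal.from R = pR := terminal.hom_ext _ _
      rw [ModelStructure.Fibrant, this]; exact hfpR
    have h1 := (hQE₁ B hB R hRfib j).mp hwj
    have h2 := (hQE₁ A hA R hRfib (F.map g ≫ j)).mp (mN.weq_comp _ _ hg hwj)
    rw [Adjunction.homEquiv_naturality_left] at h2
    exact mM.weq_of_comp_right g _ h1 h2
  intro X Y f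
  constructor
  · -- cofibration iff
    constructor
    · exact hF_cof f
    · intro hFf
      obtain ⟨Z, i, p, hci, hfp, hwp, hcomp⟩ := mM.fact_cof_trivFib f
      -- f has LLP against p
      have hlift : HasLiftingProperty f p := by
        constructor
        intro u v sq
        have h2 := hF_trivFib p hfp hwp
        haveI : HasLiftingProperty (F.map f) (F.map p) :=
          mN.lift_cof_trivFib _ _ hFf h2.1 h2.2
        have sq' : CommSq (F.map u) (F.map f) (F.map p) (F.map v) :=
          ⟨by rw [← F.map_comp, ← F.map_comp, sq.w]⟩
        refine CommSq.HasLift.mk' ⟨F.preimage sq'.lift, ?_, ?_⟩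
        · apply F.map_injective
          rw [F.map_comp, F.map_preimage, sq'.fac_left]
        · apply F.map_injective
          rw [F.map_comp, F.map_preimage, sq'.fac_right]
      have sq : CommSq i f p (𝟙 Y) := ⟨by simp [hcomp]⟩
      have hs1 := sq.fac_left
      have hs2 := sq.fac_right
      apply mM.cof_retract f i ⟨𝟙 X, 𝟙 X, sq.lift, p, by simp, hs2, by simp [hs1], by simp [hcomp]⟩ hci
  constructor
  · -- fibration iff
    constructor
    · exact hF_fib f
    · intro hFf
      obtain ⟨Z, i, p, hci, hwi, hfp, hcomp⟩ := mM.fact_trivCof_fib f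
      -- f has RLP against i
      have hlift : HasLiftingProperty i f := by
        constructor
        intro u v sq
        have h1 := hF_trivCof i hci hwi
        haveI : HasLiftingProperty (F.map i) (F.map f) :=
          mN.lift_trivCof_fib _ _ h1.1 h1.2 hFf
        have sq' : CommSq (F.map u) (F.map i) (F.map f) (F.map v) :=
          ⟨by rw [← F.map_comp, ← F.map_comp, sq.w]⟩
        refine CommSq.HasLift.mk' ⟨F.preimage sq'.lift, ?_, ?_⟩
        · apply F.map_injective
          rw [F.map_comp, F.map_preimage, sq'.fac_left]
        · apply F.map_injective
          rw [F.map_comp, F.map_preimage, sq'.fac_right]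
      have sq : CommSq (𝟙 X) i f p := ⟨by simp [hcomp]⟩
      have hr1 := sq.fac_left
      have hr2 := sq.fac_right
      apply mM.fib_retract f p ⟨i, sq.lift, 𝟙 Y, 𝟙 Y, hr1, by simp, by simp [hcomp], by simp [hr2]⟩ hfp
  · -- weak equivalence iff
    constructor
    · exact Fweq f
    · intro hFf
      -- cofibrant replacements
      obtain ⟨QX, iX, qX, hciX, hfqX, hwqX, hcompX⟩ := mM.fact_cof_trivFib (initial.to X)
      obtain ⟨QY, iY, qY, hciY, hfqY, hwqY, hcompY⟩ := mM.fact_cof_trivFib (initial.to Y)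
      have hQXc : mM.Cofibrant QX := by
        have : initial.to QX = iX := initial.hom_ext _ _
        rw [ModelStructure.Cofibrant, this]; exact hciX
      have hQYc : mM.Cofibrant QY := by
        have : initial.to QY = iY := initial.hom_ext _ _
        rw [ModelStructure.Cofibrant, this]; exact hciY
      haveI : HasLiftingProperty (initial.to QX) qY :=
        mM.lift_cof_trivFib _ _ hQXc hfqY hwqY
      have sq : CommSq (initial.to QY) (initial.to QX) qY (qX ≫ f) :=
        ⟨initial.hom_ext _ _⟩
      obtain ⟨Qf, hQf⟩ : ∃ Qf : QX ⟶ QY, Qf ≫ qY = qX ≫ f := ⟨sq.lift, sq.fac_right⟩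
      -- F Qf is a weak equivalence
      have hFQf : mN.weq (F.map Qf) := by
        apply mN.weq_of_comp_right (F.map Qf) (F.map qY) (Fweq qY hwqY)
        rw [← F.map_comp, hQf, F.map_comp]
        exact mN.weq_comp _ _ (Fweq qX hwqX) hFf
      have hQf_weq : mM.weq Qf := refl_cof Qf hQXc hQYc hFQf
      have : mM.weq (qX ≫ f) := by
        rw [← hQf]
        exact mM.weq_comp _ _ hQf_weq hwqY
      exact mM.weq_of_comp_left qX f hwqX this
end

section
/- Let X be a quasi-category. Then two morphisms α, β in X with the same source x and target y represent the same morphism in the homotopy category hC(X) if and only if there exists a 2-simplex h of X with d₂h = α, d₁h = β, and d₀h = s₀y; moreover this relation is an equivalence relation on the set of 1-simplices from x to y. -/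
/-!
The relation is left homotopy of edges in the 2-truncation of `X`. Symmetry and transitivity
come from filling the inner horns `Λ[3, 1]` and `Λ[3, 2]` assembled from the given triangles and
the degenerate triangle `s₀ s₀ y`; these fillers (together with `Λ[2, 1]`-fillers) make the
2-truncation a 2-truncated quasicategory, in which left homotopy is an equivalence relation.
-/

open CategoryTheory Simplicial

/-- Two 1-simplices `α`, `β` of a simplicial set `X` (with common source and common
target `y`) are homotopic if there is a 2-simplex `h` with `d₂ h = α`, `d₁ h = β` and
`d₀ h = s₀ y`. -/
def QCHomotopic (X : SSet) (y : X _⦋0⦌) (α β : X _⦋1⦌) : Prop :=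
  ∃ h : X _⦋2⦌, X.δ 2 h = α ∧ X.δ 1 h = β ∧ X.δ 0 h = X.σ 0 y

namespace SSet

universe u
variable {X : SSet.{u}}

namespace Quasicategory
variable [Quasicategory X]

lemma exists_δ_eq_of_horn {n : ℕ} {i : Fin (n + 2)}
    (h0 : 0 < i) (hn : i < Fin.last (n + 1)) (σ₀ : (Λ[n + 1, i] : SSet) ⟶ X) :
    ∃ t : X _⦋n + 1⦌, ∀ j (hj : j ≠ i), X.δ j t = yonedaEquiv (horn.ι i j hj ≫ σ₀) := by
  obtain ⟨σ, rfl⟩ := Quasicategory.hornFilling h0 hn σ₀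
  exact ⟨yonedaEquiv σ, fun j hj => by
    rw [← stdSimplex.yonedaEquiv_δ_comp, horn.ι_ι_assoc]⟩

variable {x₀ x₁ x₂ x₃ : X _⦋0⦌}

lemma exists_compStruct (e₀₁ : Edge x₀ x₁) (e₁₂ : Edge x₁ x₂) :
    ∃ e₀₂ : Edge x₀ x₂, Nonempty (Edge.CompStruct e₀₁ e₁₂ e₀₂) := by
  have hcompat : stdSimplex.δ 0 ≫ yonedaEquiv.symm e₀₁.edge =
      stdSimplex.δ 1 ≫ yonedaEquiv.symm e₁₂.edge := by
    rw [stdSimplex.δ_comp_yonedaEquiv_symm, stdSimplex.δ_comp_yonedaEquiv_symm,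
      e₀₁.tgt_eq, e₁₂.src_eq]
  obtain ⟨t, ht⟩ := exists_δ_eq_of_horn (i := 1) (by decide) (by decide)
    ((horn₂₁.isPushout.{u}).desc _ _ hcompat)
  have h₂ : X.δ 2 t = e₀₁.edge := by simpa using ht 2 (by decide)
  have h₀ : X.δ 0 t = e₁₂.edge := by simpa using ht 0 (by decide)
  refine ⟨Edge.mk (X.δ 1 t) ?_ ?_, ⟨Edge.CompStruct.mk t h₂ h₀ rfl⟩⟩
  · calc X.δ 1 (X.δ 1 t) = X.δ 1 (X.δ 2 t) := X.δ_comp_δ_self_apply (i := 1) t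
      _ = x₀ := by rw [h₂, e₀₁.src_eq]
  · calc X.δ 0 (X.δ 1 t) = X.δ 0 (X.δ 0 t) := (X.δ_comp_δ_self_apply (i := 0) t).symm
      _ = x₂ := by rw [h₀, e₁₂.tgt_eq]

variable {e₀₁ : Edge x₀ x₁} {e₁₂ : Edge x₁ x₂} {e₂₃ : Edge x₂ x₃}
  {e₀₂ : Edge x₀ x₂} {e₁₃ : Edge x₁ x₃} {e₀₃ : Edge x₀ x₃}

lemma nonempty_compStruct_of_horn₃₁ (f₃ : Edge.CompStruct e₀₁ e₁₂ e₀₂)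
    (f₀ : Edge.CompStruct e₁₂ e₂₃ e₁₃) (f₂ : Edge.CompStruct e₀₁ e₁₃ e₀₃) :
    Nonempty (Edge.CompStruct e₀₂ e₂₃ e₀₃) := by
  obtain ⟨t, ht⟩ := exists_δ_eq_of_horn (i := 1) (by decide) (by decide)
    (horn₃₁.desc.{u} (yonedaEquiv.symm f₀.simplex) (yonedaEquiv.symm f₂.simplex)
      (yonedaEquiv.symm f₃.simplex)
      (by simp only [stdSimplex.δ_comp_yonedaEquiv_symm, Edge.CompStruct.d₂, Edge.CompStruct.d₀])
      (by simp only [stdSimplex.δ_comp_yonedaEquiv_symm, Edge.CompStruct.d₁, Edge.CompStruct.d₀])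
      (by simp only [stdSimplex.δ_comp_yonedaEquiv_symm, Edge.CompStruct.d₂]))
  have h₀ : X.δ 0 t = f₀.simplex := by simpa using ht 0 (by decide)
  have h₂ : X.δ 2 t = f₂.simplex := by simpa using ht 2 (by decide)
  have h₃ : X.δ 3 t = f₃.simplex := by simpa using ht 3 (by decide)
  refine ⟨Edge.CompStruct.mk (X.δ 1 t) ?_ ?_ ?_⟩
  · calc X.δ 2 (X.δ 1 t) = X.δ 1 (X.δ 3 t) :=
          (X.δ_comp_δ_apply (i := 1) (j := 2) (by decide) t).symm
      _ = e₀₂.edge := by rw [h₃, f₃.d₁]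
  · calc X.δ 0 (X.δ 1 t) = X.δ 0 (X.δ 0 t) := (X.δ_comp_δ_self_apply (i := 0) t).symm
      _ = e₂₃.edge := by rw [h₀, f₀.d₀]
  · calc X.δ 1 (X.δ 1 t) = X.δ 1 (X.δ 2 t) := X.δ_comp_δ_self_apply (i := 1) t
      _ = e₀₃.edge := by rw [h₂, f₂.d₁]

lemma nonempty_compStruct_of_horn₃₂ (f₃ : Edge.CompStruct e₀₁ e₁₂ e₀₂)
    (f₀ : Edge.CompStruct e₁₂ e₂₃ e₁₃) (f₁ : Edge.CompStruct e₀₂ e₂₃ e₀₃) :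
    Nonempty (Edge.CompStruct e₀₁ e₁₃ e₀₃) := by
  obtain ⟨t, ht⟩ := exists_δ_eq_of_horn (i := 2) (by decide) (by decide)
    (horn₃₂.desc.{u} (yonedaEquiv.symm f₀.simplex) (yonedaEquiv.symm f₁.simplex)
      (yonedaEquiv.symm f₃.simplex)
      (by simp only [stdSimplex.δ_comp_yonedaEquiv_symm, Edge.CompStruct.d₂, Edge.CompStruct.d₁])
      (by simp only [stdSimplex.δ_comp_yonedaEquiv_symm, Edge.CompStruct.d₂, Edge.CompStruct.d₀])
      (by simp only [stdSimplex.δ_comp_yonedaEquiv_symm, Edge.CompStruct.d₀]))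
  have h₀ : X.δ 0 t = f₀.simplex := by simpa using ht 0 (by decide)
  have h₁ : X.δ 1 t = f₁.simplex := by simpa using ht 1 (by decide)
  have h₃ : X.δ 3 t = f₃.simplex := by simpa using ht 3 (by decide)
  refine ⟨Edge.CompStruct.mk (X.δ 2 t) ?_ ?_ ?_⟩
  · calc X.δ 2 (X.δ 2 t) = X.δ 2 (X.δ 3 t) := X.δ_comp_δ_self_apply (i := 2) t
      _ = e₀₁.edge := by rw [h₃, f₃.d₂]
  · calc X.δ 0 (X.δ 2 t) = X.δ 1 (X.δ 0 t) := X.δ_comp_δ_apply (i := 0) (j := 1) (by decide) t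
      _ = e₁₃.edge := by rw [h₀, f₀.d₁]
  · calc X.δ 1 (X.δ 2 t) = X.δ 1 (X.δ 1 t) := (X.δ_comp_δ_self_apply (i := 1) t).symm
      _ = e₀₃.edge := by rw [h₁, f₁.d₁]

instance quasicategory₂_truncation : Truncated.Quasicategory₂ ((truncation 2).obj X) where
  fill21 e₀₁ e₁₂ := by
    obtain ⟨e₀₂, ⟨f⟩⟩ := exists_compStruct (Edge.ofTruncated e₀₁) (Edge.ofTruncated e₁₂)
    exact ⟨⟨e₀₂.toTruncated, f.toTruncated⟩⟩
  fill31 f₃ f₀ f₂ :=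
    nonempty_compStruct_of_horn₃₁ (.ofTruncated f₃) (.ofTruncated f₀) (.ofTruncated f₂)
  fill32 f₃ f₀ f₁ :=
    nonempty_compStruct_of_horn₃₂ (.ofTruncated f₃) (.ofTruncated f₀) (.ofTruncated f₁)

end Quasicategory

end SSet

open SSet in
lemma qcHomotopic_iff_homotopicL {X : SSet} {x y : X _⦋0⦌} (e e' : Edge x y) :
    QCHomotopic X y e.edge e'.edge ↔ Truncated.HomotopicL e.toTruncated e'.toTruncated :=
  ⟨fun ⟨h, h₂, h₁, h₀⟩ => ⟨Edge.CompStruct.mk (e₀₁ := e) (e₁₂ := .id y) (e₀₂ := e') h h₂ h₀ h₁⟩,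
    fun ⟨f⟩ => ⟨f.simplex, f.d₂, f.d₁, f.d₀⟩⟩

/-- in a quasi-category `X`, the relation "there exists a 2-simplex `h` with
`d₂ h = α`, `d₁ h = β`, `d₀ h = s₀ y`" is an equivalence relation (reflexive, symmetric and
transitive) on the set of 1-simplices with fixed source `x` and target `y`; it is the relation
of representing the same morphism in the homotopy category. -/
theorem stmt17 (X : SSet) [SSet.Quasicategory X] (x y : X _⦋0⦌) :
    (∀ α : X _⦋1⦌, X.δ 1 α = x → X.δ 0 α = y → QCHomotopic X y α α) ∧
    (∀ α β : X _⦋1⦌, X.δ 1 α = x → X.δ 0 α = y → X.δ 1 β = x → X.δ 0 β = y →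
      QCHomotopic X y α β → QCHomotopic X y β α) ∧
    (∀ α β γ : X _⦋1⦌, X.δ 1 α = x → X.δ 0 α = y → X.δ 1 β = x → X.δ 0 β = y →
      X.δ 1 γ = x → X.δ 0 γ = y →
      QCHomotopic X y α β → QCHomotopic X y β γ → QCHomotopic X y α γ) := by
  refine ⟨fun α hα₁ hα₀ => ?_, fun α β hα₁ hα₀ hβ₁ hβ₀ hαβ => ?_,
    fun α β γ hα₁ hα₀ hβ₁ hβ₀ hγ₁ hγ₀ hαβ hβγ => ?_⟩
  · exact (qcHomotopic_iff_homotopicL (.mk α hα₁ hα₀) _).2 .refl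
  · exact (qcHomotopic_iff_homotopicL (.mk β hβ₁ hβ₀) (.mk α hα₁ hα₀)).2
      ((qcHomotopic_iff_homotopicL _ _).1 hαβ).symm
  · exact (qcHomotopic_iff_homotopicL (.mk α hα₁ hα₀) (.mk γ hγ₁ hγ₀)).2
      (((qcHomotopic_iff_homotopicL (.mk α hα₁ hα₀) (.mk β hβ₁ hβ₀)).1 hαβ).trans
        ((qcHomotopic_iff_homotopicL _ _).1 hβγ))
end
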